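/- Let z_τ : [t_{i-1}, t_i] → ℝ^d be a polynomial of degree ≤ k, H ∈ C¹(ℝ^d) with gradient η, and let Π denote the L²-orthogonal projection onto ℝ^d-valued polynomials of degree ≤ k-1 on [t_{i-1}, t_i]. Then H(z_τ(t_i)) - H(z_τ(t_{i-1})) = ∫_{t_{i-1}}^{t_i} ⟨Π η(z_τ(t)), ∂ₜ z_τ(t)⟩ dt. -/

import Mathlib

open MeasureTheory RealInnerProductSpace

/-!
Differentiating the degree-`k` polynomial `z` gives a polynomial `z'` of degree `≤ k - 1`, so
`z'` is an admissible test function in the orthogonality relation defining `Pη`. Hence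
`∫ ⟪Pη, z'⟫ = ∫ ⟪∇H ∘ z, z'⟫`, and by the chain rule and the fundamental theorem of calculus
the latter is `H (z t₁) - H (z t₀)`.
-/

section Polynomial

variable {𝕜 E : Type*} [NontriviallyNormedField 𝕜] [NormedAddCommGroup E] [NormedSpace 𝕜 E]

theorem continuous_sum_pow_smul {n : ℕ} (a : Fin n → E) :
    Continuous fun s : 𝕜 => ∑ j : Fin n, s ^ (j : ℕ) • a j := by
  fun_prop

theorem hasDerivAt_sum_pow_smul {k : ℕ} (a : Fin (k + 1) → E) (s : 𝕜) :
    HasDerivAt (fun s => ∑ j : Fin (k + 1), s ^ (j : ℕ) • a j)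
      (∑ j : Fin k, s ^ (j : ℕ) • (((j : 𝕜) + 1) • a j.succ)) s := by
  have hsum := HasDerivAt.fun_sum fun (j : Fin (k + 1)) (_ : j ∈ Finset.univ) =>
    (hasDerivAt_pow (j : ℕ) s).smul_const (a j)
  convert hsum using 1
  rw [Fin.sum_univ_succ]
  simp only [Fin.val_zero, Nat.cast_zero, zero_mul, zero_smul, zero_add, Fin.val_succ,
    Nat.add_sub_cancel, smul_smul]
  push_cast
  simp only [mul_comm]

end Polynomial

section ChainRule

variable {F : Type*} [NormedAddCommGroup F] [InnerProductSpace ℝ F]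

theorem integral_inner_eq_of_integral_inner_sub_eq_zero {f g h : ℝ → F} (hf : Continuous f)
    (hg : Continuous g) (hh : Continuous h) {t₀ t₁ : ℝ}
    (horth : ∫ s in t₀..t₁, ⟪f s - g s, h s⟫ = 0) :
    ∫ s in t₀..t₁, ⟪f s, h s⟫ = ∫ s in t₀..t₁, ⟪g s, h s⟫ := by
  simp only [inner_sub_left] at horth
  rwa [intervalIntegral.integral_sub ((hf.inner hh).intervalIntegrable _ _)
    ((hg.inner hh).intervalIntegrable _ _), sub_eq_zero] at horth

variable [CompleteSpace F]

theorem ContDiff.continuous_gradient {H : F → ℝ} (hH : ContDiff ℝ 1 H) :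
    Continuous (gradient H) :=
  (InnerProductSpace.toDual ℝ F).symm.continuous.comp (hH.continuous_fderiv one_ne_zero)

theorem HasGradientAt.comp_hasDerivAt {H : F → ℝ} {g : F} {z : ℝ → F} {z' : F} {s : ℝ}
    (hH : HasGradientAt H g (z s)) (hz : HasDerivAt z z' s) :
    HasDerivAt (fun t => H (z t)) ⟪g, z'⟫ s := by
  have hcomp := hH.hasFDerivAt.comp_hasDerivAt s hz
  simp only [InnerProductSpace.toDual_apply_apply] at hcomp
  exact hcomp

theorem integral_inner_gradient_comp_eq_sub {H : F → ℝ} (hH : ContDiff ℝ 1 H) {z z' : ℝ → F}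
    (hz : ∀ s, HasDerivAt z (z' s) s) (hz' : Continuous z') (t₀ t₁ : ℝ) :
    ∫ s in t₀..t₁, ⟪gradient H (z s), z' s⟫ = H (z t₁) - H (z t₀) := by
  have hz_cont : Continuous z := continuous_iff_continuousAt.2 fun s => (hz s).continuousAt
  refine intervalIntegral.integral_eq_sub_of_hasDerivAt (f := fun s => H (z s)) (fun s _ => ?_) ?_
  · exact ((hH.differentiable one_ne_zero).differentiableAt.hasGradientAt).comp_hasDerivAt (hz s)
  · exact ((hH.continuous_gradient.comp hz_cont).inner hz').intervalIntegrable t₀ t₁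

end ChainRule

theorem projected_chain_rule_general {d k : ℕ} (t₀ t₁ : ℝ)
    (H : EuclideanSpace ℝ (Fin d) → ℝ) (hH : ContDiff ℝ 1 H)
    (η : EuclideanSpace ℝ (Fin d) → EuclideanSpace ℝ (Fin d)) (hη : η = gradient H)
    (z Pη : ℝ → EuclideanSpace ℝ (Fin d))
    -- z is a polynomial of degree ≤ k
    (hz : ∃ a : Fin (k + 1) → EuclideanSpace ℝ (Fin d),
      ∀ s, z s = ∑ j : Fin (k + 1), s ^ (j : ℕ) • a j)
    -- Pη is a polynomial of degree ≤ k-1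
    (hPη : ∃ c : Fin k → EuclideanSpace ℝ (Fin d),
      ∀ s, Pη s = ∑ j : Fin k, s ^ (j : ℕ) • c j)
    -- Pη is the L²-orthogonal projection of η ∘ z onto degree ≤ k-1 polynomials
    (horth : ∀ c : Fin k → EuclideanSpace ℝ (Fin d),
      ∫ s in t₀..t₁, ⟪η (z s) - Pη s, ∑ j : Fin k, s ^ (j : ℕ) • c j⟫ = 0) :
    H (z t₁) - H (z t₀) = ∫ s in t₀..t₁, ⟪Pη s, deriv z s⟫ := by
  subst hη
  obtain ⟨a, ha⟩ := hz
  obtain ⟨c, hc⟩ := hPη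
  set b : Fin k → EuclideanSpace ℝ (Fin d) := fun j => ((j : ℝ) + 1) • a j.succ
  have hz' : ∀ s, HasDerivAt z (∑ j : Fin k, s ^ (j : ℕ) • b j) s := fun s => by
    rw [funext ha]
    exact hasDerivAt_sum_pow_smul a s
  have hz_cont : Continuous z := continuous_iff_continuousAt.2 fun s => (hz' s).continuousAt
  have hz'_cont := continuous_sum_pow_smul (𝕜 := ℝ) b
  have hPη_cont : Continuous Pη := funext hc ▸ continuous_sum_pow_smul c
  simp only [(hz' _).deriv]
  rw [← integral_inner_gradient_comp_eq_sub hH hz' hz'_cont]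
  exact integral_inner_eq_of_integral_inner_sub_eq_zero (hH.continuous_gradient.comp hz_cont)
    hPη_cont hz'_cont (horth b)

/-- Key identity for discrete energy consistency: since `∂ₜ z_τ` has degree
≤ k-1, the chain rule combines with the defining property of the
L²-projection `Π` tested against `∂ₜ z_τ`. -/
theorem projected_chain_rule {d k : ℕ} (hk : 1 ≤ k) (t₀ t₁ : ℝ) (hlt : t₀ < t₁)
    (H : EuclideanSpace ℝ (Fin d) → ℝ) (hH : ContDiff ℝ 1 H)
    (η : EuclideanSpace ℝ (Fin d) → EuclideanSpace ℝ (Fin d)) (hη : η = gradient H)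
    (z Pη : ℝ → EuclideanSpace ℝ (Fin d))
    -- z is a polynomial of degree ≤ k
    (hz : ∃ a : Fin (k + 1) → EuclideanSpace ℝ (Fin d),
      ∀ s, z s = ∑ j : Fin (k + 1), s ^ (j : ℕ) • a j)
    -- Pη is a polynomial of degree ≤ k-1
    (hPη : ∃ c : Fin k → EuclideanSpace ℝ (Fin d),
      ∀ s, Pη s = ∑ j : Fin k, s ^ (j : ℕ) • c j)
    -- Pη is the L²-orthogonal projection of η ∘ z onto degree ≤ k-1 polynomials
    (horth : ∀ c : Fin k → EuclideanSpace ℝ (Fin d),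
      ∫ s in t₀..t₁, ⟪η (z s) - Pη s, ∑ j : Fin k, s ^ (j : ℕ) • c j⟫ = 0) :
    H (z t₁) - H (z t₀) = ∫ s in t₀..t₁, ⟪Pη s, deriv z s⟫ :=
  projected_chain_rule_general t₀ t₁ H hH η hη z Pη hz hPη horth
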